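/- Let v : ℝ^N → ℝ be twice continuously differentiable whose Hessian is Lipschitz continuous with constant L > 0 on the segment [x, x+s], and write H = ∇²v(x). Suppose λ ≥ 0 and n ∈ ℝ^N satisfy ∇v(x) + H n + λ n = 0; that s = n + t for some t ∈ ℝ^N; that ‖H t‖ ≤ κht ‖s‖² for some κht > 0; that ‖s‖ ≥ κntn ‖n‖ for some κntn ∈ (0,1); and that λ ≤ σ ‖n‖ for some σ > 0. Then ‖∇v(x+s)‖ ≤ (L + κht + σ/κntn²) ‖s‖². -/

import Mathlib

/-!
Write `g = ∇v` and `H = ∇²v(x)`. The Lipschitz Hessian gives the Taylor bound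
`‖g(x+s) - g(x) - H s‖ ≤ L‖s‖²`, and stationarity of the normal step rewrites the linear model
`g(x) + H s` as `H t - λ n`. The first term is controlled by the tangential-step condition, the
second by `λ‖n‖ ≤ σ‖n‖² ≤ σ‖s‖²/κntn²`.
-/

theorem ContDiff.gradient {F : Type*} [NormedAddCommGroup F] [InnerProductSpace ℝ F]
    [CompleteSpace F] {f : F → ℝ} {n : WithTop ℕ∞} (hf : ContDiff ℝ (n + 1) f) :
    ContDiff ℝ n (gradient f) :=
  (InnerProductSpace.toDual ℝ F).symm.toContinuousLinearEquiv.contDiff.comp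
    (hf.fderiv_right le_rfl)

theorem norm_sub_sub_fderiv_le_of_norm_fderiv_sub_le
    {E F : Type*} [NormedAddCommGroup E] [NormedSpace ℝ E] [NormedAddCommGroup F]
    [NormedSpace ℝ F] {f : E → F} {x s : E} {L : ℝ} (hL : 0 ≤ L)
    (hf : ∀ a ∈ segment ℝ x (x + s), DifferentiableAt ℝ f a)
    (hlip : ∀ a ∈ segment ℝ x (x + s), ‖fderiv ℝ f a - fderiv ℝ f x‖ ≤ L * ‖a - x‖) :
    ‖f (x + s) - f x - fderiv ℝ f x s‖ ≤ L * ‖s‖ ^ 2 := by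
  have hbound : ∀ a ∈ segment ℝ x (x + s), ‖fderiv ℝ f a - fderiv ℝ f x‖ ≤ L * ‖s‖ := by
    intro a ha
    calc ‖fderiv ℝ f a - fderiv ℝ f x‖ ≤ L * ‖a - x‖ := hlip a ha
      _ ≤ L * ‖x + s - x‖ := by gcongr; exact norm_sub_le_of_mem_segment ha
      _ = L * ‖s‖ := by rw [add_sub_cancel_left]
  have := (convex_segment x (x + s)).norm_image_sub_le_of_norm_fderiv_le' hf hbound
    (left_mem_segment ℝ x (x + s)) (right_mem_segment ℝ x (x + s))
  rwa [add_sub_cancel_left, mul_assoc, ← sq] at this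

theorem norm_smul_le_div_sq_mul_sq {E : Type*} [SeminormedAddCommGroup E] [NormedSpace ℝ E]
    {lam σ κ : ℝ} {n s : E} (hlam : 0 ≤ lam) (hlamub : lam ≤ σ * ‖n‖) (hσ : 0 ≤ σ)
    (hκ : 0 < κ) (hsn : κ * ‖n‖ ≤ ‖s‖) :
    ‖lam • n‖ ≤ σ / κ ^ 2 * ‖s‖ ^ 2 :=
  calc ‖lam • n‖ = lam * ‖n‖ := by rw [norm_smul, Real.norm_of_nonneg hlam]
    _ ≤ σ * ‖n‖ * ‖n‖ := by gcongr
    _ = σ / κ ^ 2 * (κ * ‖n‖) ^ 2 := by field_simp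
    _ ≤ σ / κ ^ 2 * ‖s‖ ^ 2 := by gcongr

theorem gradient_bound_after_step_general (N : ℕ)
    (v : EuclideanSpace ℝ (Fin N) → ℝ) (hv : ContDiff ℝ 2 v)
    (x s : EuclideanSpace ℝ (Fin N)) (L : ℝ) (hL : 0 < L)
    (hlip : ∀ a ∈ segment ℝ x (x + s), ∀ b ∈ segment ℝ x (x + s),
      ‖fderiv ℝ (gradient v) a - fderiv ℝ (gradient v) b‖ ≤ L * ‖a - b‖)
    (lam : ℝ) (hlam : 0 ≤ lam)
    (n t : EuclideanSpace ℝ (Fin N))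
    (hstat : gradient v x + fderiv ℝ (gradient v) x n + lam • n = 0)
    (hs : s = n + t)
    (κht : ℝ)
    (hHt : ‖fderiv ℝ (gradient v) x t‖ ≤ κht * ‖s‖ ^ 2)
    (κntn : ℝ) (hκntn : κntn ∈ Set.Ioo (0 : ℝ) 1) (hsn : ‖s‖ ≥ κntn * ‖n‖)
    (σ : ℝ) (hσ : 0 < σ) (hlamub : lam ≤ σ * ‖n‖) :
    ‖gradient v (x + s)‖ ≤ (L + κht + σ / κntn ^ 2) * ‖s‖ ^ 2 := by
  set g := gradient v
  set H := fderiv ℝ g x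
  have hg : Differentiable ℝ g := (hv.gradient (n := 1)).differentiable one_ne_zero
  have htaylor : ‖g (x + s) - g x - H s‖ ≤ L * ‖s‖ ^ 2 :=
    norm_sub_sub_fderiv_le_of_norm_fderiv_sub_le hL.le (fun a _ => hg a)
      (fun a ha => hlip a ha x (left_mem_segment ℝ x (x + s)))
  have hmult : ‖lam • n‖ ≤ σ / κntn ^ 2 * ‖s‖ ^ 2 :=
    norm_smul_le_div_sq_mul_sq hlam hlamub hσ.le hκntn.1 hsn
  have hsplit : g (x + s) = (g (x + s) - g x - H s) + (H t - lam • n) := by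
    rw [hs, H.map_add]
    linear_combination (norm := module) hstat
  calc ‖g (x + s)‖ = ‖(g (x + s) - g x - H s) + (H t - lam • n)‖ := congrArg norm hsplit
    _ ≤ ‖g (x + s) - g x - H s‖ + (‖H t‖ + ‖lam • n‖) :=
        (norm_add_le _ _).trans (by gcongr; exact norm_sub_le _ _)
    _ ≤ L * ‖s‖ ^ 2 + (κht * ‖s‖ ^ 2 + σ / κntn ^ 2 * ‖s‖ ^ 2) := by gcongr
    _ = (L + κht + σ / κntn ^ 2) * ‖s‖ ^ 2 := by ring

/-- Lemma 3.17: bound on the gradient of the constraint-violation measure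
after an accepted step `s = n + t`.  Here `H = ∇²v(x) = fderiv ℝ (gradient v) x`. -/
theorem gradient_bound_after_step (N : ℕ)
    (v : EuclideanSpace ℝ (Fin N) → ℝ) (hv : ContDiff ℝ 2 v)
    (x s : EuclideanSpace ℝ (Fin N)) (L : ℝ) (hL : 0 < L)
    (hlip : ∀ a ∈ segment ℝ x (x + s), ∀ b ∈ segment ℝ x (x + s),
      ‖fderiv ℝ (gradient v) a - fderiv ℝ (gradient v) b‖ ≤ L * ‖a - b‖)
    (lam : ℝ) (hlam : 0 ≤ lam)
    (n t : EuclideanSpace ℝ (Fin N))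
    (hstat : gradient v x + fderiv ℝ (gradient v) x n + lam • n = 0)
    (hs : s = n + t)
    (κht : ℝ) (hκht : 0 < κht)
    (hHt : ‖fderiv ℝ (gradient v) x t‖ ≤ κht * ‖s‖ ^ 2)
    (κntn : ℝ) (hκntn : κntn ∈ Set.Ioo (0 : ℝ) 1) (hsn : ‖s‖ ≥ κntn * ‖n‖)
    (σ : ℝ) (hσ : 0 < σ) (hlamub : lam ≤ σ * ‖n‖) :
    ‖gradient v (x + s)‖ ≤ (L + κht + σ / κntn ^ 2) * ‖s‖ ^ 2 :=
  gradient_bound_after_step_general N v hv x s L hL hlip lam hlam n t hstat hs κht hHt κntn hκntn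
    hsn σ hσ hlamub
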